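/- Let n ≥ 3 and let S_n be the star graph on vertices {0,1,...,n−1} with center 0. Let Γ_0 = {α ∈ PwEnd(S_n) \ PsEnd(S_n) : 0 ∈ dom(α) and 0α ≠ 0} and let D be the set of partial maps on {0,...,n−1} of the form (0↦0, A↦1, B↦2) with A, B ⊆ {1,...,n−1} disjoint and A ≠ ∅. Then |Γ_0| = (n−1)·|D|. -/

import Mathlib

variable {V : Type*}

/-- Partial transformations of `V`. -/
abbrev PTrans (V : Type*) := V → Option V

/-- Monoid of partial transformations under (left-to-right) composition. -/
instance : Monoid (PTrans V) where
  mul f g := fun v => (f v).bind g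
  one := fun v => some v
  mul_assoc f g h := by
    funext v
    show ((f v).bind g).bind h = (f v).bind (fun x => (g x).bind h)
    cases f v <;> simp
  one_mul f := by funext v; rfl
  mul_one f := by
    funext v
    show (f v).bind (fun x => some x) = f v
    cases f v <;> simp

/-- Domain of a partial transformation. -/
def pdom (α : PTrans V) : Set V := {u | α u ≠ none}

/-- Image of a partial transformation. -/
def pim (α : PTrans V) : Set V := {v | ∃ u, α u = some v}

def IsPEnd (G : SimpleGraph V) (α : PTrans V) : Prop :=
  ∀ u v u' v', α u = some u' → α v = some v' → G.Adj u v → G.Adj u' v'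

def IsPwEnd (G : SimpleGraph V) (α : PTrans V) : Prop :=
  ∀ u v u' v', α u = some u' → α v = some v' → G.Adj u v → u' ≠ v' → G.Adj u' v'

def IsPsEnd (G : SimpleGraph V) (α : PTrans V) : Prop :=
  ∀ u v u' v', α u = some u' → α v = some v' → (G.Adj u v ↔ G.Adj u' v')

def IsPswEnd (G : SimpleGraph V) (α : PTrans V) : Prop :=
  ∀ u v u' v', α u = some u' → α v = some v' → ((G.Adj u v ∧ u' ≠ v') ↔ G.Adj u' v')

/-- Injectivity of a partial transformation. -/
def PInjective (α : PTrans V) : Prop :=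
  ∀ u v w, α u = some w → α v = some w → u = v

open Classical in
/-- The inverse of a partial (injective) transformation. -/
noncomputable def pinv (α : PTrans V) : PTrans V :=
  fun v => if h : ∃ u, α u = some v then some h.choose else none

/-- Partial automorphism: injective, and both it and its inverse are
partial endomorphisms. -/
def IsPAut (G : SimpleGraph V) (α : PTrans V) : Prop :=
  PInjective α ∧ IsPEnd G α ∧ IsPEnd G (pinv α)

/-- The star graph on vertices `{0,1,...,n-1}` with center `0`. -/
def starGraph (n : ℕ) : SimpleGraph (Fin n) :=
  SimpleGraph.fromRel (fun u _ => (u : ℕ) = 0)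

lemma star_adj {n : ℕ} (u v : Fin n) :
    (starGraph n).Adj u v ↔ u ≠ v ∧ ((u : ℕ) = 0 ∨ (v : ℕ) = 0) := by
  unfold starGraph
  rw [SimpleGraph.fromRel_adj]

lemma mem_S1_iff {n : ℕ} (hz : 0 < n) (α : PTrans (Fin n)) :
    (IsPwEnd (starGraph n) α ∧ ¬ IsPsEnd (starGraph n) α ∧
      ∃ ℓ : Fin n, α ⟨0, hz⟩ = some ℓ ∧ ℓ ≠ ⟨0, hz⟩) ↔
    ∃ ℓ : Fin n, ℓ ≠ ⟨0, hz⟩ ∧ α ⟨0, hz⟩ = some ℓ ∧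
      (∀ i : Fin n, i ≠ ⟨0, hz⟩ → ∀ j, α i = some j → j = ℓ ∨ j = ⟨0, hz⟩) ∧
      ∃ i : Fin n, i ≠ ⟨0, hz⟩ ∧ α i = some ℓ := by
  set z : Fin n := ⟨0, hz⟩ with hzd
  constructor
  · rintro ⟨hw, hs, ℓ, h0, hℓ⟩
    have hℓv : (ℓ : ℕ) ≠ 0 := fun h => hℓ (Fin.ext h)
    have hall : ∀ i : Fin n, i ≠ z → ∀ j, α i = some j → j = ℓ ∨ j = z := by
      intro i hi j hj
      by_cases hje : j = ℓ
      · exact Or.inl hje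
      · have hadj : (starGraph n).Adj z i := (star_adj z i).mpr ⟨fun e => hi e.symm, Or.inl rfl⟩
        have h2 := hw z i ℓ j h0 hj hadj (fun e => hje e.symm)
        rw [star_adj] at h2
        rcases h2.2 with h | h
        · exact absurd h hℓv
        · exact Or.inr (Fin.ext h)
    refine ⟨ℓ, hℓ, h0, hall, ?_⟩
    by_contra hno
    push_neg at hno
    apply hs
    intro u v u' v' hu hv
    have key : ∀ w w' : Fin n, α w = some w' → (w = z ∧ w' = ℓ) ∨ (w ≠ z ∧ w' = z) := by
      intro w w' hw'
      by_cases hwz : w = z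
      · subst hwz
        rw [h0] at hw'
        exact Or.inl ⟨rfl, (Option.some_injective _ hw').symm⟩
      · rcases hall w hwz w' hw' with h | h
        · exact absurd hw' (h ▸ hno w hwz)
        · exact Or.inr ⟨hwz, h⟩
    rcases key u u' hu with ⟨hu1, hu2⟩ | ⟨hu1, hu2⟩ <;>
      rcases key v v' hv with ⟨hv1, hv2⟩ | ⟨hv1, hv2⟩
    · subst hu1; subst hv1; subst hu2; subst hv2
      simp [star_adj]
    · subst hu1; subst hu2; subst hv2
      have hvz : v ≠ z := hv1
      refine iff_of_true ?_ ?_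
      · exact (star_adj _ _).mpr ⟨fun e => hvz e.symm, Or.inl rfl⟩
      · exact (star_adj _ _).mpr ⟨hℓ, Or.inr rfl⟩
    · subst hv1; subst hu2; subst hv2
      refine iff_of_true ?_ ?_
      · exact (star_adj _ _).mpr ⟨hu1, Or.inr rfl⟩
      · exact (star_adj _ _).mpr ⟨fun e => hℓ e.symm, Or.inl rfl⟩
    · subst hu2; subst hv2
      refine iff_of_false ?_ ?_
      · intro h
        rcases ((star_adj _ _).mp h).2 with h' | h'
        · exact hu1 (Fin.ext h')
        · exact hv1 (Fin.ext h')
      · intro h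
        exact ((star_adj _ _).mp h).1 rfl
  · rintro ⟨ℓ, hℓ, h0, hall, i, hiz, hi⟩
    refine ⟨?_, ?_, ℓ, h0, hℓ⟩
    · intro u v u' v' hu hv hadj hne
      rw [star_adj] at hadj ⊢
      obtain ⟨huv, h | h⟩ := hadj
      · have huz : u = z := Fin.ext h
        subst huz
        have hu' : u' = ℓ := Option.some_injective _ (hu.symm.trans h0)
        subst hu'
        rcases hall v (fun e => huv e.symm) v' hv with rfl | rfl
        · exact absurd rfl hne
        · exact ⟨hne, Or.inr rfl⟩
      · have hvz : v = z := Fin.ext h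
        subst hvz
        have hv' : v' = ℓ := Option.some_injective _ (hv.symm.trans h0)
        subst hv'
        rcases hall u huv u' hu with rfl | rfl
        · exact absurd rfl hne
        · exact ⟨hne, Or.inl rfl⟩
    · intro hps
      have h2 := hps z i ℓ ℓ h0 hi
      rw [star_adj, star_adj] at h2
      exact (h2.mp ⟨fun e => hiz e.symm, Or.inl rfl⟩).1 rfl

lemma key {n : ℕ} (hn : 3 ≤ n) (hz : 0 < n) (h1 : 1 < n) (h2 : 2 < n) :
    Nat.card {α : PTrans (Fin n) // IsPwEnd (starGraph n) α ∧ ¬ IsPsEnd (starGraph n) α ∧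
        ∃ ℓ : Fin n, α ⟨0, hz⟩ = some ℓ ∧ ℓ ≠ ⟨0, hz⟩} =
    (n - 1) * Nat.card {α : PTrans (Fin n) //
        α ⟨0, hz⟩ = some (⟨0, hz⟩ : Fin n) ∧
        (∀ i : Fin n, i ≠ ⟨0, hz⟩ → ∀ j, α i = some j →
          (j = (⟨1, h1⟩ : Fin n) ∨ j = (⟨2, h2⟩ : Fin n))) ∧
        ∃ i : Fin n, i ≠ ⟨0, hz⟩ ∧ α i = some (⟨1, h1⟩ : Fin n)} := by
  set z : Fin n := ⟨0, hz⟩ with hzd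
  set o : Fin n := ⟨1, h1⟩ with hod
  set t : Fin n := ⟨2, h2⟩ with htd
  have hzo : z ≠ o := by simp [hzd, hod, Fin.ext_iff]
  have hzt : z ≠ t := by simp [hzd, htd, Fin.ext_iff]
  have hot : o ≠ t := by simp [hod, htd, Fin.ext_iff]
  have hcard : Nat.card {ℓ : Fin n // ℓ ≠ z} = n - 1 := by
    rw [Nat.card_eq_fintype_card]
    have h := Fintype.card_subtype_compl (fun x : Fin n => x = z)
    simp only [Fintype.card_subtype_eq, Fintype.card_fin] at h
    exact h
  have e : ({ℓ : Fin n // ℓ ≠ z} ×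
      {α : PTrans (Fin n) // α z = some z ∧
        (∀ i : Fin n, i ≠ z → ∀ j, α i = some j → (j = o ∨ j = t)) ∧
        ∃ i : Fin n, i ≠ z ∧ α i = some o}) ≃
      {α : PTrans (Fin n) // IsPwEnd (starGraph n) α ∧ ¬ IsPsEnd (starGraph n) α ∧
        ∃ ℓ : Fin n, α z = some ℓ ∧ ℓ ≠ z} := by
    refine Equiv.ofBijective
      (fun p => ⟨fun x => ((p.2 : PTrans (Fin n)) x).map (fun j => if j = t then z else (p.1 : Fin n)), ?_⟩)
      ⟨?_, ?_⟩
    · -- membership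
      obtain ⟨⟨ℓ, hℓ⟩, ⟨δ, hδ0, hδall, i, hiz, hio⟩⟩ := p
      rw [mem_S1_iff hz]
      refine ⟨ℓ, hℓ, ?_, ?_, i, hiz, ?_⟩
      · rw [← hzd]; simp only [hδ0, Option.map_some, if_neg hzt]
      · intro i' hi' j hj
        rw [Option.map_eq_some_iff] at hj
        obtain ⟨a, ha, hfa⟩ := hj
        rcases hδall i' hi' a ha with rfl | rfl
        · rw [if_neg hot] at hfa; exact Or.inl hfa.symm
        · rw [if_pos rfl] at hfa; exact Or.inr hfa.symm
      · simp only [hio, Option.map_some, if_neg hot]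
    · -- injective
      rintro ⟨⟨ℓ, hℓ⟩, ⟨δ, hδ0, hδall, hδex⟩⟩ ⟨⟨ℓ', hℓ'⟩, ⟨δ', hδ0', hδall', hδex'⟩⟩ hpq
      simp only [Subtype.mk.injEq] at hpq
      have hℓℓ : ℓ = ℓ' := by
        have hx := congrFun hpq z
        try dsimp only at hx
        rw [hδ0, hδ0'] at hx
        simp only [Option.map_some, if_neg hzt, Option.some.injEq] at hx
        exact hx
      subst hℓℓ
      have hδδ : δ = δ' := by
        funext x
        have hx := congrFun hpq x
        try dsimp only at hx
        by_cases hxz : x = z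
        · subst hxz; rw [hδ0, hδ0']
        · cases hp : δ x with
          | none =>
            rw [hp, Option.map_none, eq_comm, Option.map_eq_none_iff] at hx
            rw [hx]
          | some a =>
            rw [hp, Option.map_some, eq_comm, Option.map_eq_some_iff] at hx
            obtain ⟨b, hb, hfb⟩ := hx
            rw [hb]
            rcases hδall x hxz a hp with rfl | rfl <;>
              rcases hδall' x hxz b hb with rfl | rfl
            · rfl
            · rw [if_pos rfl, if_neg hot] at hfb
              exact absurd hfb.symm hℓ
            · rw [if_neg hot, if_pos rfl] at hfb
              exact absurd hfb hℓ
            · rfl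
      subst hδδ
      rfl
    · -- surjective
      rintro ⟨α, hα⟩
      obtain ⟨ℓ, hℓ, h0, hall, i, hiz, hi⟩ := (mem_S1_iff hz α).mp hα
      rw [← hzd] at hℓ h0 hall hiz
      refine ⟨⟨⟨ℓ, hℓ⟩, ⟨fun x => if x = z then some z else (α x).map (fun j => if j = z then t else o),
        if_pos rfl, ?_, i, hiz, ?_⟩⟩, ?_⟩
      · intro i' hi' j hj
        dsimp only at hj
        rw [if_neg hi', Option.map_eq_some_iff] at hj
        obtain ⟨a, ha, hfa⟩ := hj
        rcases hall i' hi' a ha with rfl | rfl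
        · rw [if_neg hℓ] at hfa; exact Or.inl hfa.symm
        · rw [if_pos rfl] at hfa; exact Or.inr hfa.symm
      · dsimp only
        rw [if_neg hiz, hi, Option.map_some, if_neg hℓ]
      · apply Subtype.ext
        funext x
        dsimp only
        by_cases hxz : x = z
        · subst hxz
          rw [if_pos rfl, Option.map_some, if_neg hzt, h0]
        · rw [if_neg hxz]
          cases hax : α x with
          | none => rfl
          | some a =>
            rcases hall x hxz a hax with rfl | rfl
            · rw [Option.map_some, if_neg hℓ, Option.map_some, if_neg hot]
            · rw [Option.map_some, if_pos rfl, Option.map_some, if_pos rfl]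
  rw [Nat.card_congr e.symm, Nat.card_prod, hcard]

theorem stmt17 (n : ℕ) (hn : 3 ≤ n) :
    Set.ncard {α : PTrans (Fin n) | IsPwEnd (starGraph n) α ∧ ¬ IsPsEnd (starGraph n) α ∧
        ∃ ℓ : Fin n, α ⟨0, by omega⟩ = some ℓ ∧ ℓ ≠ ⟨0, by omega⟩} =
    (n - 1) * Set.ncard {α : PTrans (Fin n) |
        α ⟨0, by omega⟩ = some (⟨0, by omega⟩ : Fin n) ∧
        (∀ i : Fin n, i ≠ ⟨0, by omega⟩ → ∀ j, α i = some j →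
          (j = (⟨1, by omega⟩ : Fin n) ∨ j = (⟨2, by omega⟩ : Fin n))) ∧
        ∃ i : Fin n, i ≠ ⟨0, by omega⟩ ∧ α i = some (⟨1, by omega⟩ : Fin n)} := by
  exact key hn (by omega) (by omega) (by omega)
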